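/- In the same satisfiability reduction game: if F is unsatisfiable, then no Nash stable partition exists. Specifically, any Nash stable partition must be individually rational, in an individually rational partition at most one of {p, ¬p} can be in the coalition of player 1, and if for some clause X = (ℓ₁∨...∨ℓ_t) none of ℓ₁,...,ℓ_t is in π(1), then X strictly prefers joining π(1), and subsequently player 1 strictly prefers leaving, contradicting Nash stability. -/

import Mathlib

/-!
Read a valuation off a Nash stable partition `π` by making true the literals in the coalition
`π(1)` of player 1. Nash stability forces individual rationality (a player with an unacceptable
partner would rather stand alone), so `π(1)` contains no clause, no player 0 and no
complementary pair of literals, and the valuation is consistent with `π(1)`. A clause `X`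
falsified by it then finds every member of `π(1)` acceptable, and values player 1 strictly above
anybody in its own coalition, so under BB-preferences `X` strictly prefers joining `π(1)`.
-/

open Finset

/-- A partition of the player set into coalitions: `part i` is the coalition
containing player `i`. -/
structure HPartition (N : Type*) where
  part : N → Finset N
  mem_self : ∀ i, i ∈ part i
  eq_of_mem : ∀ i j : N, j ∈ part i → part j = part i

section Defs

variable {N : Type*} [DecidableEq N]

/-- Strict part of a weak preference over coalitions. -/
def SPref (pref : N → Finset N → Finset N → Prop) (i : N) (S T : Finset N) : Prop :=
  pref i S T ∧ ¬ pref i T S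

/-- `S` is an (existing or empty) coalition of the partition `π`. -/
def IsCoalitionOf (π : HPartition N) (S : Finset N) : Prop :=
  S = ∅ ∨ ∃ j, S = π.part j

/-- Nash stability: no player strictly prefers joining another existing
(possibly empty) coalition. -/
def NashStable (pref : N → Finset N → Finset N → Prop) (π : HPartition N) : Prop :=
  ∀ i S, IsCoalitionOf π S → S ≠ π.part i →
    ¬ SPref pref i (insert i S) (π.part i)

/-- Individual stability: no strictly improving move that all members of the
joined coalition weakly approve. -/
def IndStable (pref : N → Finset N → Finset N → Prop) (π : HPartition N) : Prop :=
  ∀ i S, IsCoalitionOf π S → S ≠ π.part i →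
    ¬ (SPref pref i (insert i S) (π.part i) ∧ ∀ j ∈ S, pref j (insert i S) S)

/-- Contractual individual stability: no strictly improving move approved by the
joined coalition and by the abandoned coalition. -/
def ContIndStable (pref : N → Finset N → Finset N → Prop) (π : HPartition N) : Prop :=
  ∀ i S, IsCoalitionOf π S → S ≠ π.part i →
    ¬ (SPref pref i (insert i S) (π.part i) ∧ (∀ j ∈ S, pref j (insert i S) S) ∧
        (∀ j ∈ π.part i, j ≠ i → pref j ((π.part i).erase i) (π.part i)))

/-- Individual rationality: everyone weakly prefers his coalition to being alone. -/
def IndRational (pref : N → Finset N → Finset N → Prop) (π : HPartition N) : Prop :=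
  ∀ i, pref i (π.part i) {i}

/-- A CIS deviation from `π` to `π'`: player `i` moves to the (possibly empty)
existing coalition `T`, strictly improving, while no member of `T` nor of the
abandoned coalition is worse off. -/
def CISDeviation (pref : N → Finset N → Finset N → Prop) (π π' : HPartition N) : Prop :=
  ∃ i T, IsCoalitionOf π T ∧ T ≠ π.part i ∧ i ∉ T ∧
    SPref pref i (insert i T) (π.part i) ∧
    (∀ j ∈ T, pref j (insert i T) T) ∧
    (∀ j ∈ π.part i, j ≠ i → pref j ((π.part i).erase i) (π.part i)) ∧
    (∀ k, π'.part k = if k = i ∨ k ∈ T then insert i T else (π.part k).erase i)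

/-- The weak relation associated with a (primitive) strict relation. -/
def weakOf (sp : N → Finset N → Finset N → Prop) (i : N) (S T : Finset N) : Prop :=
  ¬ sp i T S

/-- Strict part of a weak preference over players. -/
def strictP (p : N → N → N → Prop) (i j k : N) : Prop := p i j k ∧ ¬ p i k j

/-- Player `j` is unacceptable to `i`: `i ≻ᵢ j`. -/
def unacc (p : N → N → N → Prop) (i j : N) : Prop := strictP p i i j

/-- Player `i` likes `j`: `j ≻ᵢ i`. -/
def likes (p : N → N → N → Prop) (i j : N) : Prop := strictP p i j i

/-- Each player's preference over players is a complete preorder. -/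
def CompletePreorder (p : N → N → N → Prop) : Prop :=
  (∀ i j k, p i j k ∨ p i k j) ∧ (∀ i a b c, p i a b → p i b c → p i a c)

/-- The set of `≿ᵢ`-maximal elements of `J`, with `max ∅ = {i}`. -/
def maxSet (p : N → N → N → Prop) (i : N) (J : Finset N) : Set N :=
  if J = ∅ then {i} else {m | m ∈ J ∧ ∀ j ∈ J, p i m j}

/-- The set of `≿ᵢ`-minimal elements of `J`, with `min ∅ = {i}`. -/
def minSet (p : N → N → N → Prop) (i : N) (J : Finset N) : Set N :=
  if J = ∅ then {i} else {m | m ∈ J ∧ ∀ j ∈ J, p i j m}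

/-- W-hedonic (weak) preference over coalitions: compare worst members. -/
def WPref (p : N → N → N → Prop) (i : N) (S T : Finset N) : Prop :=
  ∀ s ∈ minSet p i (S.erase i), ∀ t ∈ minSet p i (T.erase i), p i s t

/-- WW-hedonic (weak) preference over coalitions. -/
def WWPref (p : N → N → N → Prop) (i : N) (S T : Finset N) : Prop :=
  (∃ j ∈ T.erase i, unacc p i j) ∨ WPref p i S T

/-- BB-hedonic (weak) preference over coalitions. -/
def BBPref (p : N → N → N → Prop) (i : N) (S T : Finset N) : Prop :=
  (∃ j ∈ T.erase i, unacc p i j) ∨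
    ((∀ j ∈ S.erase i, ¬ unacc p i j) ∧ (∀ j ∈ T.erase i, ¬ unacc p i j) ∧
      ∀ s ∈ maxSet p i (S.erase i), ∀ t ∈ maxSet p i (T.erase i), p i s t)

/-- B-hedonic strict preference over coalitions: better best member, or
indifferent best members and smaller size. -/
def BStrict (p : N → N → N → Prop) (i : N) (S T : Finset N) : Prop :=
  (∀ s ∈ maxSet p i (S.erase i), ∀ t ∈ maxSet p i (T.erase i), strictP p i s t) ∨
    ((∀ s ∈ maxSet p i (S.erase i), ∀ t ∈ maxSet p i (T.erase i), p i s t ∧ p i t s) ∧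
      S.card < T.card)

/-- B-hedonic weak preference over coalitions. -/
def BWeak (p : N → N → N → Prop) : N → Finset N → Finset N → Prop :=
  weakOf (BStrict p)

end Defs

/-- Players of the SAT reduction game: one player per clause, one player per
literal (a variable together with a sign), and the special players 0 and 1. -/
inductive SatPlayer (k m : ℕ) where
  | clause : Fin k → SatPlayer k m
  | lit : Fin m → Bool → SatPlayer k m
  | zero : SatPlayer k m
  | one : SatPlayer k m
deriving DecidableEq, Fintype

/-- Utility encoding of the preferences of the reduction game, for a CNF
formula `F` (clause `X` is the set of literals `F X`).  The diagonal value is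
each player's acceptability threshold. -/
def satU {k m : ℕ} (F : Fin k → Finset (Fin m × Bool)) :
    SatPlayer k m → SatPlayer k m → ℤ
  | .lit q b, y =>
      match y with
      | .zero => 3
      | .one => 3
      | .lit q' b' => if q' = q then (if b' = b then 1 else 0) else 2
      | .clause _ => 0
  | .clause X, y =>
      match y with
      | .one => 4
      | .lit q b => if (q, b) ∈ F X then 1 else 3
      | .clause _ => 2
      | .zero => 1
  | .zero, y =>
      match y with
      | .one => 1
      | .clause _ => 1
      | _ => 2
  | .one, y =>
      match y with
      | .zero => 1
      | .clause _ => 1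
      | _ => 2

/-- The induced (weak) preference of each player over players. -/
def satP {k m : ℕ} (F : Fin k → Finset (Fin m × Bool)) :
    SatPlayer k m → SatPlayer k m → SatPlayer k m → Prop :=
  fun i j l => satU F i l ≤ satU F i j

open Classical in
/-- The coalition of player 1 together with the literals true under `v`. -/
noncomputable def Tcoal (k m : ℕ) (v : Fin m → Bool) : Finset (SatPlayer k m) :=
  Finset.univ.filter fun x => x = .one ∨ ∃ q b, x = .lit q b ∧ v q = b

open Classical in
/-- The coalition of player 0 together with the literals false under `v`. -/
noncomputable def Fcoal (k m : ℕ) (v : Fin m → Bool) : Finset (SatPlayer k m) :=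
  Finset.univ.filter fun x => x = .zero ∨ ∃ q b, x = .lit q b ∧ v q ≠ b

open Classical in
/-- The coalition of all clause players. -/
noncomputable def Ccoal (k m : ℕ) : Finset (SatPlayer k m) :=
  Finset.univ.filter fun x => ∃ X, x = .clause X

section UtilityPreferences

variable {N α : Type*} [LinearOrder α]

def utilPref (u : N → N → α) : N → N → N → Prop := fun i j l => u i l ≤ u i j

theorem unacc_utilPref_iff {u : N → N → α} {i j : N} :
    unacc (utilPref u) i j ↔ u i j < u i i := by
  simp only [unacc, strictP, utilPref, not_le, and_iff_right_iff_imp]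
  exact le_of_lt

theorem eq_or_mem_of_mem_maxSet [DecidableEq N] {p : N → N → N → Prop} {i t : N}
    {J : Finset N}     (ht : t ∈ maxSet p i J) : t = i ∨ t ∈ J := by
  unfold maxSet at ht
  split_ifs at ht
  · exact Or.inl ht
  · exact Or.inr ht.1

theorem le_of_mem_maxSet [DecidableEq N] {p : N → N → N → Prop} {i s t : N} {J : Finset N}
    (ht : t ∈ maxSet p i J) (hs : s ∈ J) : p i t s := by
  unfold maxSet at ht
  split_ifs at ht with hJ
  · simp [hJ] at hs
  · exact ht.2 s hs

theorem maxSet_utilPref_nonempty [DecidableEq N] (u : N → N → α) (i : N) (J : Finset N) :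
    (maxSet (utilPref u) i J).Nonempty := by
  unfold maxSet
  split_ifs with hJ
  · exact Set.singleton_nonempty i
  · obtain ⟨t, ht, hmax⟩ := J.exists_max_image (u i) (Finset.nonempty_iff_ne_empty.2 hJ)
    exact ⟨t, ht, hmax⟩

theorem sPref_bbPref_utilPref [DecidableEq N] {u : N → N → α} {i s : N} {S T : Finset N}
    (hS : ∀ j ∈ S.erase i, u i i ≤ u i j) (hT : ∀ j ∈ T.erase i, u i i ≤ u i j)
    (hs : s ∈ S.erase i) (hbest : ∀ t ∈ insert i (T.erase i), u i t < u i s) :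
    SPref (BBPref (utilPref u)) i S T := by
  have acceptable : ∀ {J : Finset N}, (∀ j ∈ J, u i i ≤ u i j) →
      ∀ j ∈ J, ¬ unacc (utilPref u) i j := fun hJ j hj hu =>
    (unacc_utilPref_iff.1 hu).not_ge (hJ j hj)
  have below_best : ∀ t ∈ maxSet (utilPref u) i (T.erase i), u i t < u i s := fun t ht =>
    hbest t (Finset.mem_insert.2 (eq_or_mem_of_mem_maxSet ht))
  refine ⟨Or.inr ⟨acceptable hS, acceptable hT, fun s' hs' t ht => ?_⟩, ?_⟩
  · exact ((below_best t ht).trans_le (le_of_mem_maxSet hs' hs)).le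
  · rintro (⟨j, hj, hu⟩ | ⟨-, -, hcmp⟩)
    · exact acceptable hS j hj hu
    · obtain ⟨t, ht⟩ := maxSet_utilPref_nonempty u i (T.erase i)
      obtain ⟨s', hs'⟩ := maxSet_utilPref_nonempty u i (S.erase i)
      exact (hcmp t ht s' hs').not_gt ((below_best t ht).trans_le (le_of_mem_maxSet hs' hs))

end UtilityPreferences

def MembersAcceptable {N : Type*} [DecidableEq N] (p : N → N → N → Prop)
    (π : HPartition N) : Prop :=
  ∀ i, ∀ j ∈ (π.part i).erase i, ¬ unacc p i j

theorem NashStable.membersAcceptable {N : Type*} [DecidableEq N] {p : N → N → N → Prop}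
    {π : HPartition N} (h : NashStable (BBPref p) π) : MembersAcceptable p π := by
  intro i j hj hu
  have alone : (∅ : Finset N) ≠ π.part i := fun h0 => by simpa [← h0] using π.mem_self i
  refine h i ∅ (Or.inl rfl) alone ⟨Or.inl ⟨j, hj, hu⟩, ?_⟩
  rintro (⟨_, hj', _⟩ | ⟨hacc, -, -⟩)
  · simp at hj'
  · exact hacc j hj hu

theorem HPartition.part_ne_of_not_mem {N : Type*} (π : HPartition N) {i j : N}
    (h : i ∉ π.part j) : π.part i ≠ π.part j :=
  fun hij => h (hij ▸ π.mem_self i)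

theorem HPartition.mem_part_symm {N : Type*} (π : HPartition N) {i j : N}
    (h : j ∈ π.part i) : i ∈ π.part j :=
  (π.eq_of_mem i j h).symm ▸ π.mem_self i

namespace SatPlayer

variable {k m : ℕ} {F : Fin k → Finset (Fin m × Bool)} {π : HPartition (SatPlayer k m)}

theorem satP_eq_utilPref (F : Fin k → Finset (Fin m × Bool)) : satP F = utilPref (satU F) :=
  rfl

def partValuation (π : HPartition (SatPlayer k m)) (q : Fin m) : Bool :=
  decide (lit q true ∈ π.part one)

theorem clause_not_mem_part_one (hπ : MembersAcceptable (satP F) π) (X : Fin k) :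
    clause X ∉ π.part one := fun hX =>
  hπ one (clause X) (Finset.mem_erase.2 ⟨by simp, hX⟩) (unacc_utilPref_iff.2 (by simp [satU]))

theorem zero_not_mem_part_one (hπ : MembersAcceptable (satP F) π) :
    zero ∉ π.part one := fun h0 =>
  hπ one zero (Finset.mem_erase.2 ⟨by simp, h0⟩) (unacc_utilPref_iff.2 (by simp [satU]))

/-- `¬p` finds `p` unacceptable, so they never share a coalition. -/
theorem partValuation_eq_of_lit_mem (hπ : MembersAcceptable (satP F) π) {q : Fin m} {b : Bool}
    (h : lit q b ∈ π.part one) :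
    partValuation π q = b := by
  cases b with
  | true => simpa [partValuation] using h
  | false =>
    simp only [partValuation, decide_eq_false_iff_not]
    intro htrue
    refine hπ (lit q false) (lit q true) (Finset.mem_erase.2 ⟨by simp, ?_⟩)
      (unacc_utilPref_iff.2 (by simp [satU]))
    rwa [π.eq_of_mem one _ h]

theorem satU_clause_ge_of_mem_part_one (hπ : MembersAcceptable (satP F) π) {X : Fin k}
    (hX : ∀ ℓ ∈ F X, partValuation π ℓ.1 ≠ ℓ.2) {y : SatPlayer k m} (hy : y ∈ π.part one) :
    satU F (clause X) (clause X) ≤ satU F (clause X) y := by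
  cases y with
  | clause Y => exact absurd hy (clause_not_mem_part_one hπ Y)
  | zero => exact absurd hy (zero_not_mem_part_one hπ)
  | one => simp [satU]
  | lit q b =>
    have : (q, b) ∉ F X := fun hqb => hX _ hqb (partValuation_eq_of_lit_mem hπ hy)
    simp [satU, this]

theorem satU_clause_lt_four {X : Fin k} {y : SatPlayer k m} (hy : y ≠ one) :
    satU F (clause X) y < 4 := by
  cases y <;> simp [satU] at hy ⊢
  split_ifs <;> simp

end SatPlayer

open SatPlayer in
/-- if the CNF formula `F` is unsatisfiable, then the constructed
BB-hedonic game has no Nash stable partition. -/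
theorem sat_reduction_unsat {k m : ℕ} (F : Fin k → Finset (Fin m × Bool))
    (hunsat : ∀ v : Fin m → Bool, ∃ X : Fin k, ∀ ℓ ∈ F X, v ℓ.1 ≠ ℓ.2) :
    ∀ π : HPartition (SatPlayer k m), ¬ NashStable (BBPref (satP F)) π := by
  intro π hNash
  have hπ := hNash.membersAcceptable
  obtain ⟨X, hX⟩ := hunsat (partValuation π)
  have hX1 := clause_not_mem_part_one hπ X
  have h1X : one ∉ π.part (clause X) := fun h => hX1 (π.mem_part_symm h)
  refine hNash (clause X) (π.part one) (Or.inr ⟨_, rfl⟩) (π.part_ne_of_not_mem h1X) ?_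
  rw [satP_eq_utilPref] at hπ ⊢
  have hS : (insert (clause X) (π.part one)).erase (clause X) = π.part one :=
    Finset.erase_insert hX1
  refine sPref_bbPref_utilPref (fun y hy => satU_clause_ge_of_mem_part_one hπ hX (hS ▸ hy))
    (fun y hy => not_lt.1 fun h => hπ _ y hy (unacc_utilPref_iff.2 h)) (hS ▸ π.mem_self one) ?_
  rintro t ht
  refine satU_clause_lt_four ?_
  rintro rfl
  simp only [Finset.mem_insert, Finset.mem_erase] at ht
  exact ht.elim (fun h => nomatch h) (fun h => h1X h.2)
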